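/- Let Y^{2n-2} = {Ā = B̄ = 0} ⊂ P^{2n} be the complete intersection with Ā = u₀³ + Σ_{i=0}^{n-1}(u_{2i+1}³ + 3u_{2i+1}²u_{2i+2} + 3u_{2i+1}u_{2i+2}² + 9u_{2i+2}³) and B̄ = u₀³ + Σ_{i=0}^{n-1}(u_{2i+1}³ - u_{2i+1}²u_{2i+2} + 3u_{2i+1}u_{2i+2}² - 3u_{2i+2}³), over a field of characteristic zero. Then the singular locus of Y^{2n-2} equals the scheme Z^{n-1} defined by u₀ = 0, u_{2i+1}² + 3u_{2i+2}² = 0 (i = 0,…,n-1), u_{2s+1}u_{2t+3} + 3u_{2s+2}u_{2t+4} = 0 and u_{2s+2}u_{2t+3} - u_{2s+1}u_{2t+4} = 0 (0 ≤ s ≤ t ≤ n-2), taken with its reduced structure. -/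

import Mathlib

open MvPolynomial

def oddVar (n : ℕ) (i : Fin n) : Fin (2 * n + 1) := ⟨2 * i.1 + 1, by have := i.2; omega⟩
def evenVar (n : ℕ) (i : Fin n) : Fin (2 * n + 1) := ⟨2 * i.1 + 2, by have := i.2; omega⟩
def sVar1 (n : ℕ) (s : Fin (n - 1)) : Fin (2 * n + 1) := ⟨2 * s.1 + 1, by have := s.2; omega⟩
def sVar2 (n : ℕ) (s : Fin (n - 1)) : Fin (2 * n + 1) := ⟨2 * s.1 + 2, by have := s.2; omega⟩
def tVar3 (n : ℕ) (t : Fin (n - 1)) : Fin (2 * n + 1) := ⟨2 * t.1 + 3, by have := t.2; omega⟩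
def tVar4 (n : ℕ) (t : Fin (n - 1)) : Fin (2 * n + 1) := ⟨2 * t.1 + 4, by have := t.2; omega⟩

noncomputable def Abar (k : Type) [Field k] (n : ℕ) : MvPolynomial (Fin (2 * n + 1)) k :=
  X ⟨0, by omega⟩ ^ 3 + ∑ i : Fin n,
    (X (oddVar n i) ^ 3 + 3 * X (oddVar n i) ^ 2 * X (evenVar n i)
      + 3 * X (oddVar n i) * X (evenVar n i) ^ 2 + 9 * X (evenVar n i) ^ 3)

noncomputable def Bbar (k : Type) [Field k] (n : ℕ) : MvPolynomial (Fin (2 * n + 1)) k :=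
  X ⟨0, by omega⟩ ^ 3 + ∑ i : Fin n,
    (X (oddVar n i) ^ 3 - X (oddVar n i) ^ 2 * X (evenVar n i)
      + 3 * X (oddVar n i) * X (evenVar n i) ^ 2 - 3 * X (evenVar n i) ^ 3)

/-- The `2 × 2` minors of the Jacobian matrix of `(Ā, B̄)`; their vanishing locus inside
`Y^{2n-2}` is the singular locus of the complete intersection `Y^{2n-2} = {Ā = B̄ = 0}`. -/
def jacobianMinors (k : Type) [Field k] (n : ℕ) : Set (MvPolynomial (Fin (2 * n + 1)) k) :=
  {P | ∃ i j : Fin (2 * n + 1),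
    P = pderiv i (Abar k n) * pderiv j (Bbar k n)
      - pderiv j (Abar k n) * pderiv i (Bbar k n)}

/-- The defining equations of the scheme `Z^{n-1} ⊂ P^{2n}`: `u₀ = 0`,
`u_{2i+1}² + 3u_{2i+2}² = 0` (`i = 0, …, n-1`), `u_{2s+1}u_{2t+3} + 3u_{2s+2}u_{2t+4} = 0`
and `u_{2s+2}u_{2t+3} - u_{2s+1}u_{2t+4} = 0` (`0 ≤ s ≤ t ≤ n-2`). -/
def Zequations (k : Type) [Field k] (n : ℕ) : Set (MvPolynomial (Fin (2 * n + 1)) k) :=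
  insert (X ⟨0, by omega⟩)
    ({P | ∃ i : Fin n, P = X (oddVar n i) ^ 2 + 3 * X (evenVar n i) ^ 2} ∪
     {P | ∃ s t : Fin (n - 1), s.1 ≤ t.1 ∧
        (P = X (sVar1 n s) * X (tVar3 n t) + 3 * X (sVar2 n s) * X (tVar4 n t) ∨
         P = X (sVar2 n s) * X (tVar3 n t) - X (sVar1 n s) * X (tVar4 n t))})

/-!
Write `u = u₀`, `x_a = u_{2a+1}`, `y_a = u_{2a+2}`, `p_a = x_a² + 3y_a²`. Then
`Ā = u³ + ∑ (x_a + 3y_a) p_a` and `B̄ = u³ + ∑ (x_a - y_a) p_a`. Modulo the `p_a`, the Jacobian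
columns of `x_a` and `y_a` are `2x_a ℓ_a` and `6y_a ℓ_a` with `ℓ_a = (x_a + 3y_a, x_a - y_a)`, and
`det (ℓ_a, ℓ_b) = 4 r_ab` where `r_ab = y_a x_b - x_a y_b`. So every minor lies in the ideal of `Z`,
and so do `Ā`, `B̄`. Conversely the `(x_a, y_a)`-minor is `-12 p_a²`, `Ā` gives `u³`, the
`(y_a, x_b)`- and `(x_a, y_b)`-minors give `48 r_ab²` modulo the `p`'s, and the two-square identity
`q_ab² + 3 r_ab² = p_a p_b` with `q_ab = x_a x_b + 3 y_a y_b` finishes.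
-/

theorem MvPolynomial.pderiv_ofNat {R σ : Type*} [CommSemiring R] (i : σ) (m : ℕ) [m.AtLeastTwo] :
    pderiv i (no_index (OfNat.ofNat m) : MvPolynomial σ R) = 0 := by
  rw [← map_ofNat C, pderiv_C]

theorem MvPolynomial.isUnit_ofNat {k σ : Type*} [Field k] [CharZero k] (m : ℕ) [m.AtLeastTwo] :
    IsUnit (OfNat.ofNat m : MvPolynomial σ k) := by
  rw [← map_ofNat C]
  exact (isUnit_iff_ne_zero.mpr (OfNat.ofNat_ne_zero m)).map C

section
variable {n : ℕ}

theorem oddVar_injective : Function.Injective (oddVar n) := fun a b h => by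
  simpa [oddVar, Fin.ext_iff] using h

theorem evenVar_injective : Function.Injective (evenVar n) := fun a b h => by
  simpa [evenVar, Fin.ext_iff] using h

theorem oddVar_ne_evenVar (a b : Fin n) : oddVar n a ≠ evenVar n b := by
  simp only [oddVar, evenVar, ne_eq, Fin.ext_iff]
  omega

theorem oddVar_ne_zero (a : Fin n) : oddVar n a ≠ 0 := by
  simp [oddVar, Fin.ext_iff]

theorem evenVar_ne_zero (a : Fin n) : evenVar n a ≠ 0 := by
  simp [evenVar, Fin.ext_iff]

theorem eq_zero_or_exists_eq_oddVar_or_evenVar (v : Fin (2 * n + 1)) :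
    v = 0 ∨ ∃ a, v = oddVar n a ∨ v = evenVar n a := by
  rcases v with ⟨v, hv⟩
  rcases Nat.even_or_odd' v with ⟨c, rfl | rfl⟩
  · rcases c with _ | c
    · exact .inl rfl
    · exact .inr ⟨⟨c, by omega⟩, .inr (Fin.ext (by simp [evenVar]; ring))⟩
  · exact .inr ⟨⟨c, by omega⟩, .inl rfl⟩

end

section
variable {k : Type} [Field k] {n : ℕ}

local notation "𝕦" => (X ⟨0, by omega⟩ : MvPolynomial (Fin (2 * n + 1)) k)
local notation "𝕩" a:max => (X (oddVar n a) : MvPolynomial (Fin (2 * n + 1)) k)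
local notation "𝕪" a:max => (X (evenVar n a) : MvPolynomial (Fin (2 * n + 1)) k)
-- `𝕡`, `𝕢`, `𝕣` are the norm, dot and cross forms: `𝕢 a b ^ 2 + 3 * 𝕣 a b ^ 2 = 𝕡 a * 𝕡 b`.
local notation "𝕡" a:max => (𝕩 a ^ 2 + 3 * 𝕪 a ^ 2)
local notation "𝕢" a:max b:max => (𝕩 a * 𝕩 b + 3 * 𝕪 a * 𝕪 b)
local notation "𝕣" a:max b:max => (𝕪 a * 𝕩 b - 𝕩 a * 𝕪 b)
local notation "𝓘" => Ideal.span ({Abar k n, Bbar k n} ∪ jacobianMinors k n)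
local notation "𝓙" => Ideal.span (Zequations k n)

theorem mem_Zequations_of_lt {a b : Fin n} (hab : a < b) :
    𝕢 a b ∈ Zequations k n ∧ 𝕣 a b ∈ Zequations k n := by
  have hs : a.1 < n - 1 := by omega
  have ht : b.1 - 1 < n - 1 := by omega
  have hst : a.1 ≤ b.1 - 1 := by omega
  have h3 : tVar3 n ⟨b - 1, ht⟩ = oddVar n b := Fin.ext (by simp only [tVar3, oddVar]; omega)
  have h4 : tVar4 n ⟨b - 1, ht⟩ = evenVar n b := Fin.ext (by simp only [tVar4, evenVar]; omega)
  refine ⟨.inr (.inr ⟨⟨a, hs⟩, ⟨b - 1, ht⟩, hst, .inl ?_⟩),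
    .inr (.inr ⟨⟨a, hs⟩, ⟨b - 1, ht⟩, hst, .inr ?_⟩)⟩ <;> rw [h3, h4] <;> rfl

theorem X_zero_mem_span_Zequations : 𝕦 ∈ 𝓙 :=
  Ideal.subset_span (Set.mem_insert _ _)

theorem normForm_mem_span_Zequations (a : Fin n) : 𝕡 a ∈ 𝓙 :=
  Ideal.subset_span (.inr (.inl ⟨a, rfl⟩))

theorem crossForm_mem_span_Zequations (a b : Fin n) : 𝕣 a b ∈ 𝓙 := by
  rcases lt_trichotomy a b with h | rfl | h
  · exact Ideal.subset_span (mem_Zequations_of_lt h).2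
  · simp [mul_comm]
  · convert neg_mem (Ideal.subset_span (mem_Zequations_of_lt h).2) using 1
    ring

theorem span_Zequations_le {𝔞 : Ideal (MvPolynomial (Fin (2 * n + 1)) k)} (hu : 𝕦 ∈ 𝔞)
    (hp : ∀ a, 𝕡 a ∈ 𝔞) (hq : ∀ a b, 𝕢 a b ∈ 𝔞) (hr : ∀ a b, 𝕣 a b ∈ 𝔞) : 𝓙 ≤ 𝔞 := by
  rw [Ideal.span_le]
  rintro P (rfl | ⟨a, rfl⟩ | ⟨s, t, -, rfl | rfl⟩)
  · exact hu
  · exact hp a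
  · exact hq ⟨s, by omega⟩ ⟨t + 1, by omega⟩
  · exact hr ⟨s, by omega⟩ ⟨t + 1, by omega⟩

variable (n) in
noncomputable def normCubic (α β : k) : MvPolynomial (Fin (2 * n + 1)) k :=
  𝕦 ^ 3 + ∑ a, (C α * 𝕩 a + C β * 𝕪 a) * 𝕡 a

theorem Abar_eq_normCubic : Abar k n = normCubic n 1 3 := by
  simp only [Abar, normCubic, map_one, map_ofNat]
  congr 1
  exact Finset.sum_congr rfl fun a _ => by ring

theorem Bbar_eq_normCubic : Bbar k n = normCubic n 1 (-1) := by
  simp only [Bbar, normCubic, map_one, map_neg]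
  congr 1
  exact Finset.sum_congr rfl fun a _ => by ring

theorem normCubic_mem_iff {𝔞 : Ideal (MvPolynomial (Fin (2 * n + 1)) k)} (hp : ∀ a, 𝕡 a ∈ 𝔞)
    (α β : k) : normCubic n α β ∈ 𝔞 ↔ 𝕦 ^ 3 ∈ 𝔞 :=
  Ideal.add_mem_iff_left _ (Ideal.sum_mem _ fun a _ => Ideal.mul_mem_left _ _ (hp a))

theorem pderiv_zero_normCubic (α β : k) : pderiv 0 (normCubic n α β) = 3 * 𝕦 ^ 2 := by
  classical
  simp [normCubic, pderiv_X, pderiv_ofNat, evenVar_ne_zero, oddVar_ne_zero]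

theorem pderiv_oddVar_normCubic (α β : k) (a : Fin n) :
    pderiv (oddVar n a) (normCubic n α β) = C α * 𝕡 a + 2 * 𝕩 a * (C α * 𝕩 a + C β * 𝕪 a) := by
  classical
  simp only [normCubic, Fin.zero_eta, map_add, map_sum, Derivation.leibniz,
    Derivation.leibniz_pow, derivation_C, pderiv_ofNat, pderiv_X, Pi.single_apply,
    oddVar_injective.eq_iff, (oddVar_ne_zero _).symm, (oddVar_ne_evenVar _ _).symm, if_false,
    smul_eq_mul, nsmul_eq_mul, smul_ite, mul_ite, mul_zero, mul_one, Finset.sum_add_distrib,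
    Finset.sum_ite_eq', Finset.mem_univ, if_true, Nat.cast_ofNat, Nat.add_one_sub_one, pow_one,
    add_zero, zero_add]
  ring

theorem pderiv_evenVar_normCubic (α β : k) (a : Fin n) :
    pderiv (evenVar n a) (normCubic n α β) = C β * 𝕡 a + 6 * 𝕪 a * (C α * 𝕩 a + C β * 𝕪 a) := by
  classical
  simp only [normCubic, Fin.zero_eta, map_add, map_sum, Derivation.leibniz,
    Derivation.leibniz_pow, derivation_C, pderiv_ofNat, pderiv_X, Pi.single_apply,
    evenVar_injective.eq_iff, (evenVar_ne_zero _).symm, oddVar_ne_evenVar, if_false,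
    smul_eq_mul, nsmul_eq_mul, smul_ite, mul_ite, mul_zero, mul_one, Finset.sum_add_distrib,
    Finset.sum_ite_eq', Finset.mem_univ, if_true, Nat.cast_ofNat, Nat.add_one_sub_one, pow_one,
    add_zero, zero_add]
  ring

variable (k n) in
noncomputable def jacobianMinor (i j : Fin (2 * n + 1)) : MvPolynomial (Fin (2 * n + 1)) k :=
  pderiv i (Abar k n) * pderiv j (Bbar k n) - pderiv j (Abar k n) * pderiv i (Bbar k n)

def IsProportionalColumn (𝔞 : Ideal (MvPolynomial (Fin (2 * n + 1)) k)) (v : Fin (2 * n + 1))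
    (w : MvPolynomial (Fin (2 * n + 1)) k) (a : Fin n) : Prop :=
  Ideal.Quotient.mk 𝔞 (pderiv v (Abar k n)) = Ideal.Quotient.mk 𝔞 (w * (𝕩 a + 3 * 𝕪 a)) ∧
    Ideal.Quotient.mk 𝔞 (pderiv v (Bbar k n)) = Ideal.Quotient.mk 𝔞 (w * (𝕩 a - 𝕪 a))

section
variable {𝔞 : Ideal (MvPolynomial (Fin (2 * n + 1)) k)}

theorem isProportionalColumn_oddVar {a : Fin n} (hp : 𝕡 a ∈ 𝔞) :
    IsProportionalColumn 𝔞 (oddVar n a) (2 * 𝕩 a) a := by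
  simp only [IsProportionalColumn, Ideal.Quotient.mk_eq_mk_iff_sub_mem, Abar_eq_normCubic,
    Bbar_eq_normCubic, pderiv_oddVar_normCubic, map_one, map_neg, map_ofNat]
  exact ⟨by convert hp using 1; ring, by convert hp using 1; ring⟩

theorem isProportionalColumn_evenVar {a : Fin n} (hp : 𝕡 a ∈ 𝔞) :
    IsProportionalColumn 𝔞 (evenVar n a) (6 * 𝕪 a) a := by
  simp only [IsProportionalColumn, Ideal.Quotient.mk_eq_mk_iff_sub_mem, Abar_eq_normCubic,
    Bbar_eq_normCubic, pderiv_evenVar_normCubic, map_one, map_neg, map_ofNat]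
  exact ⟨by convert Ideal.mul_mem_left 𝔞 3 hp using 1; ring,
    by convert Ideal.mul_mem_left 𝔞 (-1) hp using 1; ring⟩

theorem pderiv_mem_or_isProportionalColumn (hu : 𝕦 ∈ 𝔞) (hp : ∀ a, 𝕡 a ∈ 𝔞)
    (v : Fin (2 * n + 1)) :
    (pderiv v (Abar k n) ∈ 𝔞 ∧ pderiv v (Bbar k n) ∈ 𝔞) ∨ ∃ w a, IsProportionalColumn 𝔞 v w a := by
  rcases eq_zero_or_exists_eq_oddVar_or_evenVar v with rfl | ⟨a, rfl | rfl⟩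
  · have h : 3 * 𝕦 ^ 2 ∈ 𝔞 := Ideal.mul_mem_left _ _ (Ideal.pow_mem_of_mem _ hu 2 two_pos)
    left
    rw [Abar_eq_normCubic, Bbar_eq_normCubic, pderiv_zero_normCubic, pderiv_zero_normCubic]
    exact ⟨h, h⟩
  · exact .inr ⟨_, a, isProportionalColumn_oddVar (hp a)⟩
  · exact .inr ⟨_, a, isProportionalColumn_evenVar (hp a)⟩

theorem mk_jacobianMinor {i j : Fin (2 * n + 1)} {w w' : MvPolynomial (Fin (2 * n + 1)) k}
    {a b : Fin n} (hi : IsProportionalColumn 𝔞 i w a) (hj : IsProportionalColumn 𝔞 j w' b) :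
    Ideal.Quotient.mk 𝔞 (jacobianMinor k n i j) = Ideal.Quotient.mk 𝔞 (4 * w * w' * 𝕣 a b) := by
  rw [jacobianMinor, map_sub, map_mul, map_mul, hi.1, hi.2, hj.1, hj.2, ← map_mul, ← map_mul,
    ← map_sub]
  congr 1
  ring

end

theorem jacobianMinor_mem_span_Zequations (i j : Fin (2 * n + 1)) : jacobianMinor k n i j ∈ 𝓙 := by
  have column := pderiv_mem_or_isProportionalColumn (k := k) (n := n) X_zero_mem_span_Zequations
    normForm_mem_span_Zequations
  rcases column i with ⟨hA, hB⟩ | ⟨w, a, hi⟩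
  · exact sub_mem (Ideal.mul_mem_right _ _ hA) (Ideal.mul_mem_left _ _ hB)
  rcases column j with ⟨hA, hB⟩ | ⟨w', b, hj⟩
  · exact sub_mem (Ideal.mul_mem_left _ _ hB) (Ideal.mul_mem_right _ _ hA)
  rw [← Ideal.Quotient.eq_zero_iff_mem, mk_jacobianMinor hi hj, Ideal.Quotient.eq_zero_iff_mem]
  exact Ideal.mul_mem_left _ _ (crossForm_mem_span_Zequations a b)

theorem span_le_span_Zequations : 𝓘 ≤ 𝓙 := by
  have hcube : ∀ α β : k, normCubic n α β ∈ 𝓙 := fun α β =>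
    (normCubic_mem_iff normForm_mem_span_Zequations α β).mpr
      (Ideal.pow_mem_of_mem _ X_zero_mem_span_Zequations 3 three_pos)
  rw [Ideal.span_le]
  rintro P ((rfl | rfl) | ⟨i, j, rfl⟩)
  · rw [Abar_eq_normCubic]
    exact hcube 1 3
  · rw [Bbar_eq_normCubic]
    exact hcube 1 (-1)
  · exact jacobianMinor_mem_span_Zequations i j

theorem jacobianMinor_mem_radical (i j : Fin (2 * n + 1)) :
    jacobianMinor k n i j ∈ Ideal.radical 𝓘 :=
  Ideal.le_radical (Ideal.subset_span (.inr ⟨i, j, rfl⟩))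

variable [CharZero k]

theorem normForm_mem_radical (a : Fin n) : 𝕡 a ∈ Ideal.radical 𝓘 := by
  have hminor : jacobianMinor k n (oddVar n a) (evenVar n a) = -12 * 𝕡 a ^ 2 := by
    simp only [jacobianMinor, Abar_eq_normCubic, Bbar_eq_normCubic, pderiv_oddVar_normCubic,
      pderiv_evenVar_normCubic, map_one, map_neg, map_ofNat]
    ring
  refine Ideal.mem_radical_of_pow_mem (m := 2) ?_
  rw [← Ideal.unit_mul_mem_iff_mem _ (isUnit_ofNat 12).neg, neg_mul, ← neg_mul, ← hminor]
  exact jacobianMinor_mem_radical _ _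

theorem X_zero_mem_radical : 𝕦 ∈ Ideal.radical 𝓘 := by
  refine Ideal.mem_radical_of_pow_mem (m := 3) ?_
  rw [← normCubic_mem_iff normForm_mem_radical 1 3, ← Abar_eq_normCubic]
  exact Ideal.le_radical (Ideal.subset_span (.inl (.inl rfl)))

theorem crossForm_mem_radical (a b : Fin n) : 𝕣 a b ∈ Ideal.radical 𝓘 := by
  have hyx := mk_jacobianMinor (isProportionalColumn_evenVar (normForm_mem_radical (k := k) a))
    (isProportionalColumn_oddVar (normForm_mem_radical b))
  have hxy := mk_jacobianMinor (isProportionalColumn_oddVar (normForm_mem_radical (k := k) a))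
    (isProportionalColumn_evenVar (normForm_mem_radical b))
  refine Ideal.mem_radical_of_pow_mem (m := 2) ?_
  rw [← Ideal.unit_mul_mem_iff_mem _ (isUnit_ofNat 48), ← Ideal.Quotient.eq_zero_iff_mem]
  calc Ideal.Quotient.mk _ (48 * 𝕣 a b ^ 2)
      = Ideal.Quotient.mk _ (jacobianMinor k n (evenVar n a) (oddVar n b)) -
          Ideal.Quotient.mk _ (jacobianMinor k n (oddVar n a) (evenVar n b)) := by
        rw [hyx, hxy, ← map_sub]
        congr 1
        ring
    _ = 0 := by
        simp only [Ideal.Quotient.eq_zero_iff_mem.mpr (jacobianMinor_mem_radical _ _), sub_zero]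

theorem dotForm_mem_radical (a b : Fin n) : 𝕢 a b ∈ Ideal.radical 𝓘 := by
  refine Ideal.mem_radical_of_pow_mem (m := 2) ?_
  rw [show 𝕢 a b ^ 2 = 𝕡 a * 𝕡 b - 3 * 𝕣 a b ^ 2 by ring]
  exact sub_mem (Ideal.mul_mem_right _ _ (normForm_mem_radical a))
    (Ideal.mul_mem_left _ _ (Ideal.pow_mem_of_mem _ (crossForm_mem_radical a b) 2 two_pos))

theorem span_Zequations_le_radical : 𝓙 ≤ Ideal.radical 𝓘 :=
  span_Zequations_le X_zero_mem_radical normForm_mem_radical dotForm_mem_radical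
    crossForm_mem_radical

end

theorem singular_locus_eq_Z_general (k : Type) [Field k] [CharZero k] (n : ℕ) :
    (Ideal.span ({Abar k n, Bbar k n} ∪ jacobianMinors k n)).radical =
      (Ideal.span (Zequations k n)).radical :=
  le_antisymm (Ideal.radical_mono span_le_span_Zequations)
    ((Ideal.radical_isRadical _).radical_le_iff.mpr span_Zequations_le_radical)

/-- Over a field of characteristic zero, the singular locus of the complete
intersection `Y^{2n-2} = {Ā = B̄ = 0} ⊂ P^{2n}`, taken with its reduced structure, equals
the scheme `Z^{n-1}` with its reduced structure. Algebraically: the radical of the ideal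
generated by `Ā`, `B̄` and the `2 × 2` minors of the Jacobian matrix of `(Ā, B̄)` equals
the radical of the ideal generated by the defining equations of `Z^{n-1}`. -/
theorem singular_locus_eq_Z (k : Type) [Field k] [CharZero k] (n : ℕ) (hn : 2 ≤ n) :
    (Ideal.span ({Abar k n, Bbar k n} ∪ jacobianMinors k n)).radical =
      (Ideal.span (Zequations k n)).radical :=
  singular_locus_eq_Z_general k n
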